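/- Let b, c, ν ∈ ℂ with Re(c) > 1 and Re(ν) > -1, and let z > 0 be real. Then for every real ρ > 0, the derivative with respect to the real parameter ρ satisfies ∂/∂ρ [ G_ν^{(b,c)}(z;ρ) ] = -(1/(c-1)) · G_ν^{(b,c-1)}(z;ρ). -/

import Mathlib

open Complex MeasureTheory Real Set

/-- Extended Gamma function `Γ_ρ(x) = ∫_0^∞ t^(x-1) e^(-t-ρ/t) dt`. -/
noncomputable def extGamma (ρ x : ℂ) : ℂ :=
  ∫ t in Ioi (0:ℝ), (t:ℂ) ^ (x - 1) * Complex.exp (-(t:ℂ) - ρ / (t:ℂ))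

/-- Generalized Pochhammer symbol `(c;ρ)_μ = Γ_ρ(c+μ)/Γ(c)`. -/
noncomputable def genPoch (c ρ μ : ℂ) : ℂ := extGamma ρ (c + μ) / Complex.Gamma c

/-- Unified four parameter Bessel function `G_ν^{(b,c)}(z;ρ)` with complex order,
powers being principal complex powers. -/
noncomputable def unifiedG (b c ν ρ z : ℂ) : ℂ :=
  ∑' k : ℕ, (-b) ^ k * genPoch c ρ (2 * (k:ℂ) + ν) * (z / 2) ^ (2 * (k:ℂ) + ν) /
    ((k.factorial : ℂ) * Complex.Gamma (ν + (k:ℂ) + 1) * Complex.Gamma (ν + 2 * (k:ℂ) + 1))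

/-- Unified four parameter Bessel function with integer order, powers being integer powers. -/
noncomputable def unifiedGInt (b c ρ : ℂ) (ν : ℤ) (z : ℂ) : ℂ :=
  ∑' k : ℕ, (-b) ^ k * genPoch c ρ (2 * (k:ℂ) + (ν:ℂ)) * (z / 2) ^ (2 * (k:ℤ) + ν) /
    ((k.factorial : ℂ) * Complex.Gamma ((ν:ℂ) + (k:ℂ) + 1) * Complex.Gamma ((ν:ℂ) + 2 * (k:ℂ) + 1))

/-- Pochhammer symbol `(a)_k = Γ(a+k)/Γ(a)`. -/
noncomputable def poch (a : ℂ) (k : ℕ) : ℂ := Complex.Gamma (a + (k:ℂ)) / Complex.Gamma a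

/-- Generalized hypergeometric function `₀F₃`. -/
noncomputable def hyp0F3 (a₁ a₂ a₃ w : ℂ) : ℂ :=
  ∑' k : ℕ, w ^ k / (poch a₁ k * poch a₂ k * poch a₃ k * (k.factorial : ℂ))

/-- Generalized hypergeometric function `₂F₃`. -/
noncomputable def hyp2F3 (a₁ a₂ b₁ b₂ b₃ w : ℂ) : ℂ :=
  ∑' k : ℕ, poch a₁ k * poch a₂ k * w ^ k /
    (poch b₁ k * poch b₂ k * poch b₃ k * (k.factorial : ℂ))

/-- Bessel function of the first kind `J_μ(z)` for real `z > 0`. -/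
noncomputable def besselJ (μ : ℂ) (z : ℝ) : ℂ :=
  ∑' k : ℕ, (-1) ^ k * ((z:ℂ) / 2) ^ (2 * (k:ℂ) + μ) /
    ((k.factorial : ℂ) * Complex.Gamma (μ + (k:ℂ) + 1))

/-- Generalized four parameter spherical Bessel function
`g_ν^{(b,c)}(z;ρ) = √(π/(2z)) · G_{ν+1/2}^{(b,c-1/2)}(z;ρ)`. -/
noncomputable def sphG (b c ν ρ : ℂ) (z : ℝ) : ℂ :=
  (Real.sqrt (π / (2 * z)) : ℂ) * unifiedG b (c - 1/2) (ν + 1/2) ρ (z:ℂ)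

/-- Generalized four parameter Bessel-Clifford function
`C_ν^{(b,λ)}(z;ρ) = z^{-ν/2} · G_ν^{(b,λ)}(2√z;ρ)` for real `z > 0`. -/
noncomputable def cliffC (b lam ν ρ : ℂ) (z : ℝ) : ℂ :=
  (z:ℂ) ^ (-ν / 2) * unifiedG b lam ν ρ ((2 * Real.sqrt z : ℝ) : ℂ)

/-!
Differentiating under the integral sign gives `∂_ρ Γ_ρ(x) = -Γ_ρ(x - 1)`, and
`Γ(c) = (c - 1) Γ(c - 1)` turns the termwise derivative of the series for `G_ν^{(b,c)}` into
`-(1/(c - 1)) G_ν^{(b,c-1)}`. Both interchanges of limits rest on the bound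
`‖Γ_r(x)‖ ≤ n!/eⁿ · Γ(Re x + n)` for `r ≥ e > 0`, which follows from `e^{-e/t} ≤ n! (t/e)ⁿ` and
is uniform in `r`. The resulting majorant series converges by the ratio test: the ratio of
consecutive terms is `O(1/k²)`.
-/

open scoped Nat

lemma Real.exp_neg_div_le_factorial_mul_pow (n : ℕ) {e t : ℝ} (he : 0 < e) (ht : 0 < t) :
    Real.exp (-(e / t)) ≤ n ! * (t / e) ^ n := by
  have hpos : 0 < (e / t) ^ n / n ! := by positivity
  calc Real.exp (-(e / t)) = (Real.exp (e / t))⁻¹ := Real.exp_neg _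
    _ ≤ ((e / t) ^ n / n !)⁻¹ :=
      inv_anti₀ hpos (Real.pow_div_factorial_le_exp _ (by positivity) n)
    _ = n ! * (t / e) ^ n := by rw [inv_div, div_eq_mul_inv, ← inv_pow, inv_div]

lemma rpow_mul_exp_neg_sub_div_le (s : ℝ) (n : ℕ) {e r t : ℝ} (he : 0 < e) (her : e ≤ r)
    (ht : 0 < t) :
    t ^ (s - 1) * Real.exp (-t - r / t) ≤
      n ! / e ^ n * (Real.exp (-t) * t ^ (s + n - 1)) := by
  have hexp : Real.exp (-t - r / t) ≤ Real.exp (-t) * (n ! * (t / e) ^ n) :=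
    calc Real.exp (-t - r / t) ≤ Real.exp (-t - e / t) := by gcongr
      _ = Real.exp (-t) * Real.exp (-(e / t)) := by rw [← Real.exp_add, sub_eq_add_neg]
      _ ≤ _ := by gcongr; exact Real.exp_neg_div_le_factorial_mul_pow n he ht
  calc t ^ (s - 1) * Real.exp (-t - r / t)
      ≤ t ^ (s - 1) * (Real.exp (-t) * (n ! * (t / e) ^ n)) := by gcongr
    _ = n ! / e ^ n * (Real.exp (-t) * (t ^ (s - 1) * t ^ (n : ℝ))) := by
      rw [div_pow, Real.rpow_natCast]; ring
    _ = _ := by rw [← Real.rpow_add ht, sub_add_eq_add_sub]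

lemma integrableOn_rpow_mul_exp_neg_sub_div (s : ℝ) {r : ℝ} (hr : 0 < r) :
    IntegrableOn (fun t : ℝ => t ^ (s - 1) * Real.exp (-t - r / t)) (Ioi 0) := by
  obtain ⟨n, hn⟩ := exists_nat_gt (-s)
  refine ((Real.GammaIntegral_convergent (s := s + n) (by linarith)).const_mul
    (n ! / r ^ n)).mono' ?_ ?_
  · refine ContinuousOn.aestronglyMeasurable (fun t ht => ContinuousAt.continuousWithinAt ?_)
      measurableSet_Ioi
    have ht : t ≠ 0 := (mem_Ioi.mp ht).ne'
    exact (Real.continuousAt_rpow_const t _ (Or.inl ht)).mul (by fun_prop (disch := assumption))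
  · filter_upwards [self_mem_ae_restrict measurableSet_Ioi] with t (ht : 0 < t)
    rw [Real.norm_of_nonneg (by positivity)]
    exact rpow_mul_exp_neg_sub_div_le s n hr le_rfl ht

noncomputable def extGammaIntegrand (ρ x : ℂ) (t : ℝ) : ℂ :=
  (t : ℂ) ^ (x - 1) * cexp (-(t : ℂ) - ρ / t)

lemma extGamma_eq_integral (ρ x : ℂ) :
    extGamma ρ x = ∫ t in Ioi (0 : ℝ), extGammaIntegrand ρ x t :=
  rfl

lemma norm_extGammaIntegrand (x : ℂ) (r : ℝ) {t : ℝ} (ht : 0 < t) :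
    ‖extGammaIntegrand r x t‖ = t ^ (x.re - 1) * Real.exp (-t - r / t) := by
  rw [extGammaIntegrand, norm_mul, norm_cpow_eq_rpow_re_of_pos ht, Complex.norm_exp, sub_re]
  congr 2
  rw [← ofReal_neg, ← ofReal_div, ← ofReal_sub, ofReal_re]

lemma continuousOn_extGammaIntegrand (x : ℂ) (r : ℝ) :
    ContinuousOn (extGammaIntegrand r x) (Ioi 0) := by
  intro t (ht : 0 < t)
  have htC : (t : ℂ) ≠ 0 := ofReal_ne_zero.mpr ht.ne'
  exact ((continuousAt_ofReal_cpow_const t _ (Or.inr ht.ne')).mul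
    (by fun_prop (disch := assumption))).continuousWithinAt

lemma integrableOn_extGammaIntegrand (x : ℂ) {r : ℝ} (hr : 0 < r) :
    IntegrableOn (extGammaIntegrand r x) (Ioi 0) := by
  refine (integrableOn_rpow_mul_exp_neg_sub_div x.re hr).mono'
    ((continuousOn_extGammaIntegrand x r).aestronglyMeasurable measurableSet_Ioi) ?_
  filter_upwards [self_mem_ae_restrict measurableSet_Ioi] with t (ht : 0 < t)
  rw [norm_extGammaIntegrand x r ht]

lemma norm_extGamma_le (n : ℕ) {x : ℂ} {e r : ℝ} (he : 0 < e) (her : e ≤ r)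
    (hx : 0 < x.re + n) :
    ‖extGamma r x‖ ≤ n ! / e ^ n * Real.Gamma (x.re + n) := by
  rw [extGamma_eq_integral, Real.Gamma_eq_integral hx, ← integral_const_mul]
  refine norm_integral_le_of_norm_le ((Real.GammaIntegral_convergent hx).const_mul _) ?_
  filter_upwards [self_mem_ae_restrict measurableSet_Ioi] with t (ht : 0 < t)
  rw [norm_extGammaIntegrand x r ht]
  exact rpow_mul_exp_neg_sub_div_le x.re n he her ht

lemma hasDerivAt_extGammaIntegrand (x : ℂ) (s : ℝ) {t : ℝ} (ht : 0 < t) :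
    HasDerivAt (fun r : ℝ => extGammaIntegrand r x t) (-extGammaIntegrand s (x - 1) t) s := by
  have htC : (t : ℂ) ≠ 0 := ofReal_ne_zero.mpr ht.ne'
  have hexp : HasDerivAt (fun w : ℂ => cexp (-(t : ℂ) - w / t))
      (cexp (-(t : ℂ) - s / t) * -(1 / t)) s :=
    (((hasDerivAt_id (s : ℂ)).div_const (t : ℂ)).const_sub _).cexp
  refine ((hexp.const_mul ((t : ℂ) ^ (x - 1))).comp_ofReal).congr_deriv ?_
  rw [extGammaIntegrand, cpow_sub (x - 1) 1 htC, cpow_one]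
  ring

lemma hasDerivAt_extGamma (x : ℂ) {r : ℝ} (hr : 0 < r) :
    HasDerivAt (fun s : ℝ => extGamma s x) (-extGamma r (x - 1)) r := by
  have key := hasDerivAt_integral_of_dominated_loc_of_deriv_le
    (μ := volume.restrict (Ioi 0)) (x₀ := r) (s := Ioi (r / 2))
    (F := fun (s : ℝ) => extGammaIntegrand s x)
    (F' := fun (s : ℝ) t => -extGammaIntegrand s (x - 1) t)
    (bound := fun t => t ^ ((x - 1).re - 1) * Real.exp (-t - (r / 2) / t))
    (Ioi_mem_nhds (half_lt_self hr))
    (.of_forall fun s => (continuousOn_extGammaIntegrand x s).aestronglyMeasurable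
      measurableSet_Ioi)
    (integrableOn_extGammaIntegrand x hr)
    ((continuousOn_extGammaIntegrand (x - 1) r).aestronglyMeasurable measurableSet_Ioi).neg
    ?_ (integrableOn_rpow_mul_exp_neg_sub_div _ (half_pos hr)) ?_
  · rw [integral_neg] at key
    exact key.2
  · filter_upwards [self_mem_ae_restrict measurableSet_Ioi] with t (ht : 0 < t) s (hs : r / 2 < s)
    rw [norm_neg, norm_extGammaIntegrand (x - 1) s ht]
    gcongr
  · filter_upwards [self_mem_ae_restrict measurableSet_Ioi] with t (ht : 0 < t) s _
    exact hasDerivAt_extGammaIntegrand x s ht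

lemma hasDerivAt_tsum_mul_extGamma {a x : ℕ → ℂ} {ρ : ℝ} (hρ : 0 < ρ)
    (hx : ∀ k, 0 < (x k).re) (hsum : Summable fun k => ‖a k‖ * Real.Gamma (x k).re) :
    HasDerivAt (fun r : ℝ => ∑' k, a k * extGamma r (x k))
      (-∑' k, a k * extGamma ρ (x k - 1)) ρ := by
  have hρ2 : 0 < ρ / 2 := half_pos hρ
  have hρT : ρ ∈ Ioi (ρ / 2) := half_lt_self hρ
  rw [← tsum_neg]
  refine hasDerivAt_tsum_of_isPreconnected (hsum.mul_left (1 / (ρ / 2))) isOpen_Ioi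
    isPreconnected_Ioi (g' := fun k (r : ℝ) => -(a k * extGamma r (x k - 1)))
    (fun k (r : ℝ) (hr : ρ / 2 < r) => ?_) (fun k (r : ℝ) (hr : ρ / 2 < r) => ?_) hρT ?_ hρT
  · simpa using (hasDerivAt_extGamma (x k) (hρ2.trans hr)).const_mul (a k)
  · have hΓ := norm_extGamma_le 1 hρ2 hr.le (x := x k - 1) (by simpa using hx k)
    simp only [sub_re, one_re, sub_add_cancel, Nat.factorial_one, Nat.cast_one, pow_one]
      at hΓ
    rw [norm_neg, norm_mul, mul_left_comm]
    gcongr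
  · refine .of_norm_bounded hsum fun k => ?_
    have hΓ := norm_extGamma_le 0 hρ le_rfl (x := x k) (by simpa using hx k)
    simp only [Nat.factorial_zero, Nat.cast_one, pow_zero, div_one, one_mul, CharP.cast_eq_zero,
      add_zero] at hΓ
    rw [norm_mul]
    gcongr

noncomputable def besselMajorant (B a : ℝ) (ν : ℂ) (k : ℕ) : ℝ :=
  B ^ k * Real.Gamma (a + 2 * k) / (k ! * ‖Gamma (ν + k + 1)‖ * ‖Gamma (ν + 2 * k + 1)‖)

lemma besselMajorant_nonneg {B a : ℝ} (hB : 0 ≤ B) (ha : 0 < a) (ν : ℂ) (k : ℕ) :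
    0 ≤ besselMajorant B a ν k := by
  have := Real.Gamma_pos_of_pos (by positivity : 0 < a + 2 * k)
  unfold besselMajorant
  positivity

lemma besselMajorant_succ (B : ℝ) {a : ℝ} (ha : 0 < a) {ν : ℂ} (hν : -1 < ν.re) (k : ℕ) :
    besselMajorant B a ν (k + 1) = B * ((a + 2 * k) * (a + 2 * k + 1)) /
      ((k + 1) * ‖ν + k + 1‖ * (‖ν + 2 * k + 1‖ * ‖ν + 2 * k + 1 + 1‖)) *
        besselMajorant B a ν k := by
  have hk : (0 : ℝ) ≤ k := k.cast_nonneg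
  have hΓa : Real.Gamma (a + 2 * (k + 1 : ℕ)) =
      (a + 2 * k + 1) * ((a + 2 * k) * Real.Gamma (a + 2 * k)) := by
    rw [show a + 2 * ((k + 1 : ℕ) : ℝ) = a + 2 * k + 1 + 1 by push_cast; ring,
      Real.Gamma_add_one (s := a + 2 * k + 1) (by positivity),
      Real.Gamma_add_one (s := a + 2 * k) (by positivity)]
  have hΓ₁ : Gamma (ν + (k + 1 : ℕ) + 1) = (ν + k + 1) * Gamma (ν + k + 1) := by
    rw [show ν + ((k + 1 : ℕ) : ℂ) + 1 = ν + k + 1 + 1 by push_cast; ring,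
      Complex.Gamma_add_one _ (ne_zero_of_re_pos (by simp; linarith))]
  have hΓ₂ : Gamma (ν + 2 * (k + 1 : ℕ) + 1) =
      (ν + 2 * k + 1 + 1) * ((ν + 2 * k + 1) * Gamma (ν + 2 * k + 1)) := by
    rw [show ν + 2 * ((k + 1 : ℕ) : ℂ) + 1 = ν + 2 * k + 1 + 1 + 1 by push_cast; ring,
      Complex.Gamma_add_one _ (ne_zero_of_re_pos (by simp; linarith)),
      Complex.Gamma_add_one _ (ne_zero_of_re_pos (by simp; linarith))]
  have hG₁ : Gamma (ν + k + 1) ≠ 0 := Gamma_ne_zero_of_re_pos (by simp; linarith)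
  have hG₂ : Gamma (ν + 2 * k + 1) ≠ 0 := Gamma_ne_zero_of_re_pos (by simp; linarith)
  have hn₁ : ν + k + 1 ≠ 0 := ne_zero_of_re_pos (by simp; linarith)
  have hn₂ : ν + 2 * k + 1 ≠ 0 := ne_zero_of_re_pos (by simp; linarith)
  have hn₃ : ν + 2 * k + 1 + 1 ≠ 0 := ne_zero_of_re_pos (by simp; linarith)
  simp only [besselMajorant, hΓa, hΓ₁, hΓ₂, norm_mul, Nat.factorial_succ, Nat.cast_mul, pow_succ]
  push_cast
  field_simp

lemma summable_besselMajorant {B a : ℝ} (hB : 0 ≤ B) (ha : 0 < a) {ν : ℂ} (hν : -1 < ν.re) :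
    Summable (besselMajorant B a ν) := by
  refine summable_of_ratio_norm_eventually_le (r := 1 / 2) (by norm_num) ?_
  filter_upwards [Filter.eventually_ge_atTop ⌈a⌉₊, Filter.eventually_ge_atTop ⌈6 * B⌉₊,
    Filter.eventually_ge_atTop 1] with k hka hkB hk1
  replace hka : a ≤ k := Nat.ceil_le.mp hka
  replace hkB : 6 * B ≤ k := Nat.ceil_le.mp hkB
  replace hk1 : (1 : ℝ) ≤ k := by exact_mod_cast hk1
  have d₁ : (k : ℝ) ≤ ‖ν + k + 1‖ := le_trans (by simp; linarith) (re_le_norm _)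
  have d₂ : 2 * (k : ℝ) ≤ ‖ν + 2 * k + 1‖ := le_trans (by simp; linarith) (re_le_norm _)
  have d₃ : 2 * (k : ℝ) + 1 ≤ ‖ν + 2 * k + 1 + 1‖ := le_trans (by simp; linarith) (re_le_norm _)
  -- for such `k` the ratio is at most `3B / (k (k + 1))`
  have hratio : B * ((a + 2 * k) * (a + 2 * k + 1)) /
      ((k + 1) * ‖ν + k + 1‖ * (‖ν + 2 * k + 1‖ * ‖ν + 2 * k + 1 + 1‖)) ≤ 1 / 2 := by
    rw [div_le_iff₀ (mul_pos (mul_pos (by positivity) (by linarith))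
      (mul_pos (by linarith) (by linarith)))]
    have hB' : 6 * B ≤ k * (k + 1) := by nlinarith
    calc B * ((a + 2 * k) * (a + 2 * k + 1)) ≤ B * (3 * k * (2 * (2 * k + 1))) := by
          gcongr <;> linarith
      _ ≤ 1 / 2 * ((k + 1) * k * (2 * k * (2 * k + 1))) := by
          nlinarith [mul_le_mul_of_nonneg_right hB' (by positivity : (0 : ℝ) ≤ k * (2 * k + 1))]
      _ ≤ _ := by gcongr
  rw [Real.norm_of_nonneg (besselMajorant_nonneg hB ha ν _),
    Real.norm_of_nonneg (besselMajorant_nonneg hB ha ν _), besselMajorant_succ B ha hν]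
  exact mul_le_mul_of_nonneg_right hratio (besselMajorant_nonneg hB ha ν k)

noncomputable def unifiedGCoeff (b ν w : ℂ) (k : ℕ) : ℂ :=
  (-b) ^ k * w ^ (2 * (k : ℂ) + ν) / (k ! * Gamma (ν + k + 1) * Gamma (ν + 2 * k + 1))

lemma unifiedG_eq_tsum (b c ν ρ z : ℂ) :
    unifiedG b c ν ρ z =
      (Gamma c)⁻¹ * ∑' k : ℕ, unifiedGCoeff b ν (z / 2) k * extGamma ρ (c + (2 * k + ν)) := by
  rw [unifiedG, ← tsum_mul_left]
  congr 1 with k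
  simp only [unifiedGCoeff, genPoch, div_eq_mul_inv]
  ring

lemma norm_cpow_two_mul_nat_add_le (w : ℂ) {ν : ℂ} (hν : -1 < ν.re) (k : ℕ) :
    ‖w ^ (2 * (k : ℂ) + ν)‖ ≤ ‖w ^ ν‖ * (‖w‖ ^ 2) ^ k := by
  rcases eq_or_ne w 0 with rfl | hw
  · rcases k with _ | k
    · simp
    · rw [zero_cpow (ne_zero_of_re_pos (by simp; linarith)), norm_zero]
      positivity
  · have hpow : w ^ (2 * (k : ℂ)) = (w ^ 2) ^ k := by
      rw [← pow_mul, ← cpow_natCast]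
      push_cast
      ring_nf
    rw [cpow_add _ _ hw, hpow, norm_mul, norm_pow, norm_pow, mul_comm]

lemma norm_unifiedGCoeff_mul_Gamma_le (b w : ℂ) {ν : ℂ} (hν : -1 < ν.re) {a : ℝ} (ha : 0 < a)
    (k : ℕ) :
    ‖unifiedGCoeff b ν w k‖ * Real.Gamma (a + 2 * k) ≤
      ‖w ^ ν‖ * besselMajorant (‖b‖ * ‖w‖ ^ 2) a ν k := by
  have hΓ : 0 ≤ Real.Gamma (a + 2 * k) := (Real.Gamma_pos_of_pos (by positivity)).le
  simp only [unifiedGCoeff, besselMajorant, norm_div, norm_mul, norm_pow, norm_neg,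
    Complex.norm_natCast]
  calc _ ≤ ‖b‖ ^ k * (‖w ^ ν‖ * (‖w‖ ^ 2) ^ k) /
          (k ! * ‖Gamma (ν + k + 1)‖ * ‖Gamma (ν + 2 * k + 1)‖) * Real.Gamma (a + 2 * k) := by
        gcongr
        exact norm_cpow_two_mul_nat_add_le w hν k
    _ = _ := by ring

lemma summable_norm_unifiedGCoeff_mul_Gamma (b w : ℂ) {ν : ℂ} (hν : -1 < ν.re) {a : ℝ}
    (ha : 0 < a) :
    Summable fun k : ℕ => ‖unifiedGCoeff b ν w k‖ * Real.Gamma (a + 2 * k) :=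
  .of_nonneg_of_le
    (fun k => mul_nonneg (norm_nonneg _) (Real.Gamma_pos_of_pos (by positivity)).le)
    (norm_unifiedGCoeff_mul_Gamma_le b w hν ha)
    ((summable_besselMajorant (by positivity) ha hν).mul_left _)

theorem stmt10_general (b c ν : ℂ) (hc : 1 < c.re) (hν : -1 < ν.re)
    (z : ℝ) (ρ : ℝ) (hρ : 0 < ρ) :
    deriv (fun r : ℝ => unifiedG b c ν (r:ℂ) (z:ℂ)) ρ =
      -(1 / (c - 1)) * unifiedG b (c - 1) ν (ρ:ℂ) (z:ℂ) := by
  have hre (k : ℕ) : (c + (2 * k + ν)).re = c.re + ν.re + 2 * k := by simp; ring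
  have hsum := summable_norm_unifiedGCoeff_mul_Gamma b (z / 2) hν
    (a := c.re + ν.re) (by linarith)
  simp_rw [← hre] at hsum
  have hderiv := (hasDerivAt_tsum_mul_extGamma hρ
    (fun k => by rw [hre]; linarith [(k.cast_nonneg : (0 : ℝ) ≤ k)]) hsum).const_mul (Gamma c)⁻¹
  have hΓc : Gamma c = (c - 1) * Gamma (c - 1) := by
    simpa using Complex.Gamma_add_one (c - 1) (ne_zero_of_re_pos (by simp; linarith))
  simp_rw [unifiedG_eq_tsum]
  rw [hderiv.deriv, hΓc]
  simp_rw [add_sub_right_comm c]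
  rw [mul_inv]
  field_simp

theorem stmt10 (b c ν : ℂ) (hc : 1 < c.re) (hν : -1 < ν.re)
    (z : ℝ) (hz : 0 < z) (ρ : ℝ) (hρ : 0 < ρ) :
    deriv (fun r : ℝ => unifiedG b c ν (r:ℂ) (z:ℂ)) ρ =
      -(1 / (c - 1)) * unifiedG b (c - 1) ν (ρ:ℂ) (z:ℂ) :=
  stmt10_general b c ν hc hν z ρ hρ
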